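/- arXiv:0901.3189 — 2 statements merged into one kernel-verified Lean document; each statement's English description precedes it below -/
import Mathlib

section
/- Let p be a prime. For all j with 0 < j < p, b·M[p−1, j−1] + c·M[p−1, j] ≡ 0 (mod p). -/
/-- The matrix `M` from Definition 4.1: `M[0,0] = 1`, `M[0,j] = a^j` for `j > 0`,
`M[i,0] = c^i` for `i > 0`, and `M[i,j] = a*M[i,j-1] + b*M[i-1,j-1] + c*M[i-1,j]`
for `i, j > 0`. -/
def M (a b c : ℕ) : ℕ → ℕ → ℕ
  | 0, 0 => 1
  | 0, j + 1 => a ^ (j + 1)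
  | i + 1, 0 => c ^ (i + 1)
  | i + 1, j + 1 =>
      a * M a b c (i + 1) j + b * M a b c i j + c * M a b c i (j + 1)
  termination_by i j => i + j

/-!
Over `ZMod p`, the row generating functions `F i = ∑ⱼ M[i,j] Xʲ` satisfy
`(1 - aX) F (i+1) = (c + bX) F i` and `(1 - aX) F 0 = 1`, so `(1 - aX)^(i+1) F i = (c + bX)^i`.
For `i = p - 1`, the series `G = (c + bX) F (p-1)` whose coefficients are the sums
`b M[p-1,j-1] + c M[p-1,j]` satisfies `(1 - aX)^p G = (c + bX)^p`, which by Frobenius reads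
`(1 - aXᵖ) G = c + bXᵖ`. Comparing the coefficients of `Xʲ` for `0 < j < p` gives `G_j = 0`.
-/

open PowerSeries

section Entries

variable (a b c : ℕ)

theorem M_zero_left (j : ℕ) : M a b c 0 j = a ^ j := by
  cases j <;> rw [M]; rfl

theorem M_zero_right (i : ℕ) : M a b c i 0 = c ^ i := by
  cases i <;> rw [M]; rfl

theorem M_succ_succ (i j : ℕ) :
    M a b c (i + 1) (j + 1) = a * M a b c (i + 1) j + b * M a b c i j + c * M a b c i (j + 1) := by
  rw [M]

end Entries

namespace PowerSeries

variable {R : Type*} [CommRing R]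

theorem coeff_succ_C_add_C_mul_X_mul (x y : R) (f : R⟦X⟧) (n : ℕ) :
    coeff (n + 1) ((C x + C y * X) * f) = x * coeff (n + 1) f + y * coeff n f := by
  rw [add_mul, mul_assoc, map_add, coeff_C_mul, coeff_C_mul, coeff_succ_X_mul]

theorem coeff_eq_zero_of_one_sub_C_mul_X_pow_mul_eq {k j : ℕ} {x y z : R} {G : R⟦X⟧}
    (h : (1 - C x * X ^ k) * G = C z + C y * X ^ k) (hj : 0 < j) (hjk : j < k) :
    coeff j G = 0 := by
  have hXG : coeff j (X ^ k * G) = 0 := X_pow_dvd_iff.mp (dvd_mul_right _ _) j hjk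
  have := congrArg (coeff j) h
  rwa [sub_mul, one_mul, mul_assoc, map_sub, coeff_C_mul, hXG, mul_zero, sub_zero, map_add,
    coeff_C, coeff_C_mul, coeff_X_pow, if_neg hj.ne', if_neg hjk.ne, mul_zero, add_zero] at this

theorem C_add_C_mul_X_pow_card {p : ℕ} [Fact p.Prime] (x y : ZMod p) :
    (C x + C y * X : (ZMod p)⟦X⟧) ^ p = C x + C y * X ^ p := by
  have : CharP (ZMod p)⟦X⟧ p := charP_of_injective_ringHom (C_injective (R := ZMod p)) p
  rw [add_pow_char, mul_pow, ← map_pow, ← map_pow, ZMod.pow_card, ZMod.pow_card]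

end PowerSeries

section RowSeries

variable (R : Type*) [CommRing R] (a b c : ℕ)

noncomputable def rowSeries (i : ℕ) : R⟦X⟧ :=
  mk fun j => (M a b c i j : R)

theorem one_sub_mul_rowSeries_zero : (1 - C (a : R) * X) * rowSeries R a b c 0 = 1 := by
  ext (_ | n)
  · simp [rowSeries, M_zero_left]
  · rw [sub_mul, one_mul, mul_assoc, map_sub, coeff_C_mul, coeff_succ_X_mul]
    simp [rowSeries, M_zero_left, pow_succ']

theorem one_sub_mul_rowSeries_succ (i : ℕ) :
    (1 - C (a : R) * X) * rowSeries R a b c (i + 1) =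
      (C (c : R) + C (b : R) * X) * rowSeries R a b c i := by
  ext (_ | n)
  · simp [rowSeries, M_zero_right, pow_succ']
  · rw [coeff_succ_C_add_C_mul_X_mul, sub_mul, one_mul, mul_assoc, map_sub, coeff_C_mul,
      coeff_succ_X_mul]
    simp only [rowSeries, coeff_mk, M_succ_succ]
    push_cast
    ring

theorem one_sub_pow_mul_rowSeries (i : ℕ) :
    (1 - C (a : R) * X) ^ (i + 1) * rowSeries R a b c i = (C (c : R) + C (b : R) * X) ^ i := by
  induction i with
  | zero => simpa using one_sub_mul_rowSeries_zero R a b c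
  | succ i ih =>
    rw [pow_succ, mul_assoc, one_sub_mul_rowSeries_succ, mul_left_comm, ih, pow_succ']

end RowSeries

/-- Lemma 4.11(b) (sum lemma): for `p` prime and `0 < j < p`,
`b·M[p-1, j-1] + c·M[p-1, j] ≡ 0` modulo `p`. -/
theorem M_sum_column (p a b c : ℕ) (hp : p.Prime) :
    ∀ j : ℕ, 0 < j → j < p →
      b * M a b c (p - 1) (j - 1) + c * M a b c (p - 1) j ≡ 0 [MOD p] := by
  have : Fact p.Prime := ⟨hp⟩
  intro j hj hjp
  set G := (C (c : ZMod p) + C (b : ZMod p) * X) * rowSeries (ZMod p) a b c (p - 1)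
  have hG : (1 - C (a : ZMod p) * X ^ p) * G = C (c : ZMod p) + C (b : ZMod p) * X ^ p := by
    have hrow := one_sub_pow_mul_rowSeries (ZMod p) a b c (p - 1)
    rw [Nat.sub_add_cancel hp.one_le] at hrow
    have hfrob : (1 - C (a : ZMod p) * X) ^ p = 1 - C (a : ZMod p) * X ^ p := by
      simpa [sub_eq_add_neg] using C_add_C_mul_X_pow_card (1 : ZMod p) (-a)
    rw [← hfrob, ← C_add_C_mul_X_pow_card, ← mul_pow_sub_one hp.ne_zero (C _ + _), ← hrow]
    ring
  obtain ⟨n, rfl⟩ : ∃ n, j = n + 1 := Nat.exists_eq_add_one.mpr hj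
  have hGj := coeff_eq_zero_of_one_sub_C_mul_X_pow_mul_eq hG hj hjp
  rw [coeff_succ_C_add_C_mul_X_mul] at hGj
  simp only [rowSeries, coeff_mk] at hGj
  rw [← ZMod.natCast_eq_natCast_iff, Nat.add_sub_cancel]
  push_cast
  rw [← hGj]
  ring
end

section
/- Let p be a prime not dividing any of a, b, c, let k ≥ 0, let s, t ≥ 1, and let x, y, z be natural numbers. Suppose that for all i, j < p^k: M[s·p^k + i, (t−1)·p^k + j] ≡ x·M[i,j] (mod p), M[(s−1)·p^k + i, (t−1)·p^k + j] ≡ y·M[i,j] (mod p), and M[(s−1)·p^k + i, t·p^k + j] ≡ z·M[i,j] (mod p). Then for all i, j < p^k, M[s·p^k + i, t·p^k + j] ≡ (a·x + b·y + c·z)·M[i,j] (mod p). -/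
-- pointwise identity
lemma Mpoint (a b c i j m : ℕ) (hm : m ≤ i) :
    (i+1).choose (m+1) * ((i+1)+(j+1)-(m+1)).choose (i+1) * b^(m+1) * c^((i+1)-(m+1)) * a^((j+1)-(m+1))
    = a * ((i+1).choose (m+1) * ((i+1)+j-(m+1)).choose (i+1) * b^(m+1) * c^((i+1)-(m+1)) * a^(j-(m+1)))
    + b * (i.choose m * (i+j-m).choose i * b^m * c^(i-m) * a^(j-m))
    + c * (i.choose (m+1) * (i+(j+1)-(m+1)).choose i * b^(m+1) * c^(i-(m+1)) * a^((j+1)-(m+1))) := by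
  have e1 : (i+1)+(j+1)-(m+1) = (i+j-m)+1 := by omega
  have e2 : (i+1)+j-(m+1) = i+j-m := by omega
  have e3 : i+(j+1)-(m+1) = i+j-m := by omega
  have e4 : (i+1)-(m+1) = i-m := by omega
  have e5 : (j+1)-(m+1) = j-m := by omega
  rw [e1, e2, e3, e4, e5, Nat.choose_succ_succ (i+j-m) i,
      Nat.choose_succ_succ i m]
  rcases Nat.lt_or_ge m j with hmj | hmj
  · have : j - m = (j - (m+1)) + 1 := by omega
    rcases Nat.lt_or_ge m i with hmi | hmi
    · have hc : i - m = (i - (m+1)) + 1 := by omega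
      rw [this, hc]; ring
    · have : m = i := by omega
      subst this
      rw [Nat.choose_succ_self]
      rw [this]  -- careful naming
      ring
  · -- m ≥ j : (i+j-m) < i+1 so choose (i+1) = 0
    have hz : (i+j-m).choose (i+1) = 0 := Nat.choose_eq_zero_of_lt (by omega)
    rw [hz]
    rcases Nat.lt_or_ge m i with hmi | hmi
    · have hc : i - m = (i - (m+1)) + 1 := by omega
      rw [hc]; ring
    · have : m = i := by omega
      subst this
      rw [Nat.choose_succ_self]
      ring

lemma M_eq (a b c : ℕ) : ∀ i j, M a b c i j =
    ∑ m ∈ Finset.range (i+1), i.choose m * (i + j - m).choose i * b^m * c^(i-m) * a^(j-m) := by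
  intro i
  induction i with
  | zero =>
    intro j
    cases j with
    | zero => simp [M]
    | succ j => simp [M]
  | succ i ih =>
    intro j
    induction j with
    | zero =>
      rw [show M a b c (i+1) 0 = c^(i+1) by rw [M]]
      rw [Finset.sum_eq_single 0]
      · simp
      · intro m _ hm
        obtain ⟨m, rfl⟩ := Nat.exists_eq_succ_of_ne_zero hm
        rw [Nat.choose_eq_zero_of_lt (show i+1+0-(m+1) < i+1 by omega)]
        ring
      · intro h; exact absurd (Finset.mem_range.2 (by omega)) h
    | succ j ihj =>
      rw [show M a b c (i+1) (j+1)
            = a * M a b c (i+1) j + b * M a b c i j + c * M a b c i (j+1) by rw [M]]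
      rw [ih j, ih (j+1), ihj, Finset.mul_sum, Finset.mul_sum, Finset.mul_sum]
      -- extend b-sum and c-sum to range (i+2)
      have hb2 : ∑ m ∈ Finset.range (i+1), b * (i.choose m * (i + j - m).choose i * b^m * c^(i-m) * a^(j-m))
          = ∑ m ∈ Finset.range (i+2), b * (i.choose m * (i + j - m).choose i * b^m * c^(i-m) * a^(j-m)) := by
        rw [Finset.sum_range_succ (n := i+1), Nat.choose_succ_self]
        ring
      have hc2 : ∑ m ∈ Finset.range (i+1), c * (i.choose m * (i + (j+1) - m).choose i * b^m * c^(i-m) * a^((j+1)-m))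
          = ∑ m ∈ Finset.range (i+2), c * (i.choose m * (i + (j+1) - m).choose i * b^m * c^(i-m) * a^((j+1)-m)) := by
        rw [Finset.sum_range_succ (n := i+1), Nat.choose_succ_self]
        ring
      rw [hc2]
      rw [Finset.sum_range_succ' (fun m => a * ((i+1).choose m * (i + 1 + j - m).choose (i+1) * b^m * c^(i+1-m) * a^(j-m))) (i+1)]
      rw [Finset.sum_range_succ' (fun m => c * (i.choose m * (i + (j+1) - m).choose i * b^m * c^(i-m) * a^((j+1)-m))) (i+1)]
      rw [Finset.sum_range_succ' (fun m => (i+1).choose m * (i + 1 + (j+1) - m).choose (i+1) * b^m * c^(i+1-m) * a^((j+1)-m)) (i+1)]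
      have hshift : ∀ m ∈ Finset.range (i+1),
          (i+1).choose (m+1) * (i + 1 + (j+1) - (m+1)).choose (i+1) * b^(m+1) * c^(i+1-(m+1)) * a^((j+1)-(m+1))
          = a * ((i+1).choose (m+1) * (i + 1 + j - (m+1)).choose (i+1) * b^(m+1) * c^(i+1-(m+1)) * a^(j-(m+1)))
          + b * (i.choose (m) * (i + j - (m)).choose i * b^(m) * c^(i-(m)) * a^(j-(m)))
          + c * (i.choose (m+1) * (i + (j+1) - (m+1)).choose i * b^(m+1) * c^(i-(m+1)) * a^((j+1)-(m+1))) := by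
        intro m hm
        exact Mpoint a b c i j m (Nat.lt_succ_iff.mp (Finset.mem_range.mp hm))
      have hsum := Finset.sum_congr rfl hshift
      rw [hsum, Finset.sum_add_distrib, Finset.sum_add_distrib]
      have h0 : (i+1).choose 0 * (i + 1 + (j+1) - 0).choose (i+1) * b^0 * c^(i+1-0) * a^((j+1)-0)
          = a * ((i+1).choose 0 * (i + 1 + j - 0).choose (i+1) * b^0 * c^(i+1-0) * a^(j-0))
          + c * (i.choose 0 * (i + (j+1) - 0).choose i * b^0 * c^(i-0) * a^((j+1)-0)) := by
        simp only [Nat.sub_zero, Nat.choose_zero_right]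
        rw [show i + 1 + (j+1) = (i+j+1)+1 by omega, show i + 1 + j = i+j+1 by omega,
            show i + (j+1) = i+j+1 by omega, Nat.choose_succ_succ (i+j+1) i]
        ring
      rw [h0]
      omega

lemma choose_pow_add_vanish {p : ℕ} (hp : p.Prime) (k : ℕ) :
    ∀ r i : ℕ, r < i → i < p ^ k → p ∣ (p ^ k + r).choose i := by
  intro r
  induction r with
  | zero =>
    intro i hri hik
    exact hp.dvd_choose_pow (by omega) (by omega)
  | succ r ih =>
    intro i hri hik
    obtain ⟨i, rfl⟩ : ∃ i', i = i' + 1 := ⟨i - 1, by omega⟩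
    rw [show p ^ k + (r+1) = (p ^ k + r) + 1 by omega, Nat.choose_succ_succ]
    exact Nat.dvd_add (ih i (by omega) (by omega))
      (by
        rcases Nat.lt_or_ge r (i+1) with h | h
        · exact ih (i+1) h hik
        · omega)

lemma choose_pow_sub_one {p : ℕ} (hp : p.Prime) (k : ℕ) [Fact p.Prime] :
    ∀ i : ℕ, i < p ^ k → ((p ^ k - 1).choose i : ZMod p) = (-1) ^ i := by
  intro i
  induction i with
  | zero => simp
  | succ i ih =>
    intro hik
    have h1 : ((p ^ k).choose (i+1) : ZMod p) = 0 := by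
      rw [ZMod.natCast_eq_zero_iff]
      exact hp.dvd_choose_pow (by omega) (by omega)
    have h2 : (p ^ k - 1) + 1 = p ^ k := by
      have := Nat.one_le_pow k p hp.pos
      omega
    have h3 : (p ^ k).choose (i+1) = (p ^ k - 1).choose i + (p ^ k - 1).choose (i+1) := by
      conv_lhs => rw [← h2]
      exact Nat.choose_succ_succ _ _
    have : ((p^k - 1).choose i : ZMod p) + ((p^k-1).choose (i+1) : ZMod p) = 0 := by
      rw [← Nat.cast_add, ← h3, h1]
    rw [ih (by omega)] at this
    have := eq_neg_of_add_eq_zero_right this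
    rw [this]
    ring

lemma Mcol {p : ℕ} (hp : p.Prime) [Fact p.Prime] (a b c k : ℕ) :
    ∀ i, i < p ^ k → ((M a b c i (p ^ k - 1) : ℕ) : ZMod p)
      = (-1) ^ i * (b : ZMod p) ^ i * (a : ZMod p) ^ (p ^ k - 1 - i) := by
  have hq : 1 ≤ p ^ k := Nat.one_le_pow _ _ hp.pos
  intro i hi
  rw [M_eq]
  push_cast
  rw [Finset.sum_eq_single i]
  · rw [show i + (p ^ k - 1) - i = p ^ k - 1 by omega, Nat.choose_self,
      choose_pow_sub_one hp k i hi]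
    push_cast
    rw [show i - i = 0 by omega]
    ring
  · intro m hm hmi
    have hmlt : m < i := by
      have := Finset.mem_range.mp hm; omega
    have : ((i + (p ^ k - 1) - m).choose i : ZMod p) = 0 := by
      rw [ZMod.natCast_eq_zero_iff,
        show i + (p ^ k - 1) - m = p ^ k + (i - m - 1) by omega]
      exact choose_pow_add_vanish hp k (i - m - 1) i (by omega) hi
    rw [this]; ring
  · intro h; exact absurd (Finset.mem_range.2 (by omega)) h

lemma Mrow {p : ℕ} (hp : p.Prime) [Fact p.Prime] (a b c k : ℕ) :
    ∀ j, j < p ^ k → ((M a b c (p ^ k - 1) j : ℕ) : ZMod p)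
      = (-1) ^ j * (b : ZMod p) ^ j * (c : ZMod p) ^ (p ^ k - 1 - j) := by
  have hq : 1 ≤ p ^ k := Nat.one_le_pow _ _ hp.pos
  intro j hj
  rw [M_eq]
  push_cast
  rw [Finset.sum_eq_single j]
  · rw [show p ^ k - 1 + j - j = p ^ k - 1 by omega, Nat.choose_self,
      choose_pow_sub_one hp k j hj]
    push_cast
    rw [show j - j = 0 by omega]
    ring
  · intro m hm hmj
    rcases Nat.lt_or_ge m j with hmlt | hmge
    · have : ((p ^ k - 1 + j - m).choose (p ^ k - 1) : ZMod p) = 0 := by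
        rw [ZMod.natCast_eq_zero_iff,
          show p ^ k - 1 + j - m = p ^ k + (j - m - 1) by omega]
        exact choose_pow_add_vanish hp k (j - m - 1) (p ^ k - 1) (by omega) (by omega)
      rw [this]; ring
    · have : ((p ^ k - 1 + j - m).choose (p ^ k - 1)) = 0 := by
        have hmr := Finset.mem_range.mp hm
        exact Nat.choose_eq_zero_of_lt (by omega)
      rw [this]
      push_cast
      ring
  · intro h; exact absurd (Finset.mem_range.2 (by omega)) h

lemma M_zero_row (a b c j : ℕ) : M a b c 0 j = a ^ j := by cases j <;> simp [M]

lemma M_zero_col (a b c i : ℕ) : M a b c i 0 = c ^ i := by cases i <;> simp [M]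

lemma M_rec (a b c u v : ℕ) (hu : 1 ≤ u) (hv : 1 ≤ v) :
    M a b c u v = a * M a b c u (v-1) + b * M a b c (u-1) (v-1) + c * M a b c (u-1) v := by
  obtain ⟨u, rfl⟩ : ∃ u', u = u'+1 := ⟨u-1, by omega⟩
  obtain ⟨v, rfl⟩ : ∃ v', v = v'+1 := ⟨v-1, by omega⟩
  simp only [Nat.add_sub_cancel]
  rw [M]

lemma Mcorner {p : ℕ} (hp : p.Prime) [Fact p.Prime] (a b c k : ℕ) (hb : ¬ p ∣ b) :
    ((M a b c (p ^ k - 1) (p ^ k - 1) : ℕ) : ZMod p) = 1 := by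
  have hq : 1 ≤ p ^ k := Nat.one_le_pow _ _ hp.pos
  rw [Mcol hp a b c k _ (by omega), show p ^ k - 1 - (p ^ k - 1) = 0 by omega, pow_zero,
    mul_one]
  have h1 : ((-1 : ZMod p) * b) ^ (p ^ k) = (-1) * b := ZMod.pow_card_pow _
  have hbne : (b : ZMod p) ≠ 0 := fun h => hb ((ZMod.natCast_eq_zero_iff _ _).mp h)
  have hne : ((-1 : ZMod p) * b) ≠ 0 := by simp [hbne]
  have h2 : ((-1 : ZMod p) * b) ^ (p ^ k - 1) * ((-1) * b) = 1 * ((-1) * b) := by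
    rw [← pow_succ, show p ^ k - 1 + 1 = p ^ k by omega, h1, one_mul]
  have h3 := mul_right_cancel₀ hne h2
  calc (-1 : ZMod p) ^ (p ^ k - 1) * (b : ZMod p) ^ (p ^ k - 1)
      = ((-1 : ZMod p) * b) ^ (p ^ k - 1) := by rw [mul_pow]
    _ = 1 := h3
/-- Part (d) of the induction in the proof of Theorem 4.4: if the three `p^k × p^k`
submatrices of `M` with lower-left corners at `(s·p^k, (t-1)·p^k)`,
`((s-1)·p^k, (t-1)·p^k)`, and `((s-1)·p^k, t·p^k)` are an `x`-block, a `y`-block, and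
a `z`-block respectively, then the submatrix with lower-left corner at `(s·p^k, t·p^k)`
is an `(a·x + b·y + c·z)`-block. -/
theorem M_block_step (p a b c : ℕ) (hp : p.Prime)
    (ha : ¬ p ∣ a) (hb : ¬ p ∣ b) (hc : ¬ p ∣ c)
    (k s t x y z : ℕ) (hs : 1 ≤ s) (ht : 1 ≤ t)
    (hA : ∀ i j : ℕ, i < p ^ k → j < p ^ k →
      M a b c (s * p ^ k + i) ((t - 1) * p ^ k + j) ≡ x * M a b c i j [MOD p])
    (hB : ∀ i j : ℕ, i < p ^ k → j < p ^ k →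
      M a b c ((s - 1) * p ^ k + i) ((t - 1) * p ^ k + j) ≡ y * M a b c i j [MOD p])
    (hC : ∀ i j : ℕ, i < p ^ k → j < p ^ k →
      M a b c ((s - 1) * p ^ k + i) (t * p ^ k + j) ≡ z * M a b c i j [MOD p]) :
    ∀ i j : ℕ, i < p ^ k → j < p ^ k →
      M a b c (s * p ^ k + i) (t * p ^ k + j) ≡
        (a * x + b * y + c * z) * M a b c i j [MOD p] := by
  haveI := Fact.mk hp
  set q := p ^ k with hqdef
  have hq1 : 1  ≤ q := Nat.one_le_pow _ _ hp.pos
  have hs1 : (s - 1) * q = s * q - q := by rw [Nat.sub_one_mul]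
  have ht1 : (t - 1) * q = t * q - q := by rw [Nat.sub_one_mul]
  have hsq : q ≤ s * q := Nat.le_mul_of_pos_left q (by omega)
  have htq : q ≤ t * q := Nat.le_mul_of_pos_left q (by omega)
  have castEq : ∀ {m1 m2 : ℕ}, m1 ≡ m2 [MOD p] → ((m1 : ℕ) : ZMod p) = (m2 : ℕ) :=
    fun h => (ZMod.natCast_eq_natCast_iff _ _ _).mpr h
  have F3 : ((M a b c (q - 1) (q - 1) : ℕ) : ZMod p) = 1 := by
    have := Mcorner hp a b c k hb; rwa [← hqdef] at this
  have key : ∀ d : ℕ, ((d : ZMod p)) ^ (q - 1) * d = d := by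
    intro d
    rw [← pow_succ, show q - 1 + 1 = q by omega, hqdef]
    exact ZMod.pow_card_pow _
  suffices H : ∀ n : ℕ, ∀ i j : ℕ, i + j = n → i < q → j < q →
      ((M a b c (s * q + i) (t * q + j) : ℕ) : ZMod p)
        = (((a * x + b * y + c * z) * M a b c i j : ℕ) : ZMod p) by
    intro i j hi hj
    exact (ZMod.natCast_eq_natCast_iff _ _ _).mp (H (i + j) i j rfl hi hj)
  intro n
  induction n using Nat.strong_induction_on with
  | _ n ih =>
  intro i j hn hi hj
  subst hn
  rcases i with _ | i <;> rcases j with _ | j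
  · -- (0,0)
    have h1 := castEq (hA 0 (q - 1) (by omega) (by omega))
    have h2 := castEq (hB (q - 1) (q - 1) (by omega) (by omega))
    have h3 := castEq (hC (q - 1) 0 (by omega) (by omega))
    rw [M_rec a b c (s * q + 0) (t * q + 0) (by omega) (by omega),
      show s * q + 0 - 1 = (s - 1) * q + (q - 1) by omega,
      show t * q + 0 - 1 = (t - 1) * q + (q - 1) by omega]
    push_cast at h1 h2 h3 ⊢
    rw [h1, h2, h3, F3, M_zero_row, M_zero_row, M_zero_col]
    push_cast
    rw [pow_zero]
    linear_combination (x : ZMod p) * key a + (z : ZMod p) * key c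
  · -- (0, j+1)
    have h1 := ih (0 + j) (by omega) 0 j rfl (by omega) (by omega)
    have h2 := castEq (hC (q - 1) j (by omega) (by omega))
    have h3 := castEq (hC (q - 1) (j + 1) (by omega) (by omega))
    have hr2 : ((M a b c (p ^ k - 1) j : ℕ) : ZMod p)
        = (-1) ^ j * (b : ZMod p) ^ j * (c : ZMod p) ^ (p ^ k - 1 - j) :=
      Mrow hp a b c k j (by omega)
    have hr3 : ((M a b c (p ^ k - 1) (j + 1) : ℕ) : ZMod p)
        = (-1) ^ (j + 1) * (b : ZMod p) ^ (j + 1) * (c : ZMod p) ^ (p ^ k - 1 - (j + 1)) :=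
      Mrow hp a b c k (j + 1) (by omega)
    rw [← hqdef] at hr2 hr3
    rw [M_rec a b c (s * q + 0) (t * q + (j + 1)) (by omega) (by omega),
      show s * q + 0 - 1 = (s - 1) * q + (q - 1) by omega,
      show t * q + (j + 1) - 1 = t * q + j by omega]
    push_cast at h1 h2 h3 ⊢
    rw [h1, h2, h3, hr2, hr3, M_zero_row, M_zero_row]
    push_cast
    rw [show q - 1 - j = (q - 1 - (j + 1)) + 1 by omega]
    ring
  · -- (i+1, 0)
    have h1 := castEq (hA (i + 1) (q - 1) (by omega) (by omega))
    have h2 := castEq (hA i (q - 1) (by omega) (by omega))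
    have h3 := ih (i + 0) (by omega) i 0 rfl (by omega) (by omega)
    have hc2 : ((M a b c (i + 1) (p ^ k - 1) : ℕ) : ZMod p)
        = (-1) ^ (i + 1) * (b : ZMod p) ^ (i + 1) * (a : ZMod p) ^ (p ^ k - 1 - (i + 1)) :=
      Mcol hp a b c k (i + 1) (by omega)
    have hc3 : ((M a b c i (p ^ k - 1) : ℕ) : ZMod p)
        = (-1) ^ i * (b : ZMod p) ^ i * (a : ZMod p) ^ (p ^ k - 1 - i) :=
      Mcol hp a b c k i (by omega)
    rw [← hqdef] at hc2 hc3
    rw [M_rec a b c (s * q + (i + 1)) (t * q + 0) (by omega) (by omega),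
      show s * q + (i + 1) - 1 = s * q + i by omega,
      show t * q + 0 - 1 = (t - 1) * q + (q - 1) by omega]
    push_cast at h1 h2 h3 ⊢
    rw [h1, h2, h3, hc2, hc3, M_zero_col, M_zero_col]
    push_cast
    rw [show q - 1 - i = (q - 1 - (i + 1)) + 1 by omega]
    ring
  · -- (i+1, j+1)
    have h1 := ih (i + 1 + j) (by omega) (i + 1) j rfl (by omega) (by omega)
    have h2 := ih (i + j) (by omega) i j rfl (by omega) (by omega)
    have h3 := ih (i + (j + 1)) (by omega) i (j + 1) rfl (by omega) (by omega)
    have hrec := M_rec a b c (i + 1) (j + 1) (by omega) (by omega)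
    simp only [Nat.add_sub_cancel] at hrec
    rw [M_rec a b c (s * q + (i + 1)) (t * q + (j + 1)) (by omega) (by omega),
      show s * q + (i + 1) - 1 = s * q + i by omega,
      show t * q + (j + 1) - 1 = t * q + j by omega]
    have hrec' : ((M a b c (i + 1) (j + 1) : ℕ) : ZMod p)
        = (a : ZMod p) * M a b c (i + 1) j + (b : ZMod p) * M a b c i j
          + (c : ZMod p) * M a b c i (j + 1) := by
      rw [hrec]; push_cast; ring
    push_cast at h1 h2 h3 ⊢
    rw [h1, h2, h3, hrec']
    ring
end
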